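/- Let ρ : ℝ → ℝ be continuous on [0,∞), with ρ(x) = 1 for x ∈ [0,1], ρ(x) ≥ 0 for all x ≥ 0, and ρ differentiable on (1,∞) with x·ρ'(x) + ρ(x−1) = 0 for all x > 1 (so ρ is the Dickman function). Then Σ_{K=1}^{L−1} ∫_{(L−K−1)/K}^{(L−K)/K} ρ(x)/(L/K − x) dx converges to 1 as the integer L tends to infinity. -/

import Mathlib

/-!
Since `ρ' = -ρ(x - 1)/x ≤ 0`, `ρ` is antitone, and integrating `ρ(y - 1)/y` over `[1, b]`
gives `ρ(b) log b ≤ 1`, so `ρ → 0`. With `a_K = ρ(L/K - 1)`, nondecreasing in `K`, both the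
`K`-th integral and the increment `ρ(L/(K+1)) - ρ(L/K) = ∫_{L/(K+1)}^{L/K} ρ(y - 1)/y dy` lie
between `a_K/(K+1)` and `a_{K+1}/K`, and the increments telescope to `1 - ρ(L)`. Splitting the
error sum `∑ (a_{K+1}/K - a_K/(K+1))` at `K = k` bounds it by `2 a_k + 2/k`, which is small
once `k` and then `L` are large.
-/

open MeasureTheory intervalIntegral Filter Topology Set

theorem intervalIntegral_mem_Icc_of_forall_mem_Icc {f : ℝ → ℝ} {a b lo hi : ℝ} (hab : a ≤ b)
    (hf : ContinuousOn f (Icc a b)) (hbound : ∀ x ∈ Icc a b, f x ∈ Icc lo hi) :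
    ∫ x in a..b, f x ∈ Icc ((b - a) * lo) ((b - a) * hi) := by
  have hint := hf.intervalIntegrable_of_Icc (μ := volume) hab
  have hlo := integral_mono_on hab intervalIntegrable_const hint fun x hx => (hbound x hx).1
  have hhi := integral_mono_on hab hint intervalIntegrable_const fun x hx => (hbound x hx).2
  rw [intervalIntegral.integral_const, smul_eq_mul] at hlo hhi
  exact ⟨hlo, hhi⟩

theorem div_sub_div_add_one_le {p q c d u : ℝ} (hu : 0 < u) (hpq : p ≤ q) (hqd : q ≤ d)
    (hc : 1 / (u + 1) ≤ c) :
    q / u - p / (u + 1) ≤ c * (q - p) + d * (1 / u - 1 / (u + 1)) := by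
  have hw : 0 ≤ 1 / u - 1 / (u + 1) :=
    sub_nonneg.2 (one_div_le_one_div_of_le hu (by linarith))
  calc q / u - p / (u + 1) = 1 / (u + 1) * (q - p) + q * (1 / u - 1 / (u + 1)) := by ring
    _ ≤ c * (q - p) + d * (1 / u - 1 / (u + 1)) := by gcongr

theorem sum_Ico_one_div_sub_one_div_add_one {i j : ℕ} (hij : i ≤ j) :
    ∑ K ∈ Finset.Ico i j, (1 / (K : ℝ) - 1 / (K + 1)) = 1 / i - 1 / j := by
  have := Finset.sum_Ico_sub (fun K : ℕ => -(1 / (K : ℝ))) hij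
  push_cast at this
  rw [show 1 / (i : ℝ) - 1 / j = -(1 / j) - -(1 / i) by ring, ← this]
  exact Finset.sum_congr rfl fun K _ => by ring

theorem sum_Ico_div_sub_div_add_one_le_two_mul {a : ℕ → ℝ} {k : ℕ} (ha : MonotoneOn a (Icc 1 k))
    (ha₀ : 0 ≤ a 1) (hk : 1 ≤ k) :
    ∑ K ∈ Finset.Ico 1 k, (a (K + 1) / K - a K / (K + 1)) ≤ 2 * a k := by
  have hmono {i j : ℕ} (hi : 1 ≤ i) (hij : i ≤ j) (hjk : j ≤ k) : a i ≤ a j :=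
    ha ⟨hi, hij.trans hjk⟩ ⟨hi.trans hij, hjk⟩ hij
  have hak : 0 ≤ a k := ha₀.trans (hmono le_rfl hk le_rfl)
  calc _ ≤ ∑ K ∈ Finset.Ico 1 k,
        (1 * (a (K + 1) - a K) + a k * (1 / (K : ℝ) - 1 / (K + 1))) := by
        refine Finset.sum_le_sum fun K hK => ?_
        obtain ⟨hK₁, hKk⟩ := Finset.mem_Ico.1 hK
        refine div_sub_div_add_one_le (by exact_mod_cast hK₁) (hmono hK₁ K.le_succ hKk)
          (hmono (by omega) hKk le_rfl) ?_
        rw [div_le_one (by positivity)]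
        linarith [(Nat.cast_nonneg K : (0 : ℝ) ≤ K)]
    _ = (a k - a 1) + a k * (1 - 1 / k) := by
        rw [Finset.sum_add_distrib, ← Finset.mul_sum, ← Finset.mul_sum, Finset.sum_Ico_sub _ hk,
          sum_Ico_one_div_sub_one_div_add_one hk, Nat.cast_one, div_one, one_mul]
    _ ≤ 2 * a k := by nlinarith [show 0 ≤ a k * (1 / k) by positivity]

theorem sum_Ico_div_sub_div_add_one_le_two_div {a : ℕ → ℝ} {k n : ℕ}
    (ha : MonotoneOn a (Icc k n)) (ha₀ : 0 ≤ a k) (ha₁ : a n ≤ 1) (hk : 1 ≤ k) (hkn : k ≤ n) :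
    ∑ K ∈ Finset.Ico k n, (a (K + 1) / K - a K / (K + 1)) ≤ 2 / k := by
  have hmono {i j : ℕ} (hi : k ≤ i) (hij : i ≤ j) (hjn : j ≤ n) : a i ≤ a j :=
    ha ⟨hi, hij.trans hjn⟩ ⟨hi.trans hij, hjn⟩ hij
  have hk₀ : (0 : ℝ) < k := by exact_mod_cast hk
  calc _ ≤ ∑ K ∈ Finset.Ico k n,
        (1 / (k : ℝ) * (a (K + 1) - a K) + 1 * (1 / (K : ℝ) - 1 / (K + 1))) := by
        refine Finset.sum_le_sum fun K hK => ?_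
        obtain ⟨hkK, hKn⟩ := Finset.mem_Ico.1 hK
        refine div_sub_div_add_one_le (by exact_mod_cast hk.trans hkK)
          (hmono hkK K.le_succ hKn) ((hmono (by omega) hKn le_rfl).trans ha₁) ?_
        gcongr
        exact_mod_cast hkK.trans K.le_succ
    _ = 1 / k * (a n - a k) + (1 / k - 1 / n) := by
        rw [Finset.sum_add_distrib, ← Finset.mul_sum, ← Finset.mul_sum, Finset.sum_Ico_sub _ hkn,
          sum_Ico_one_div_sub_one_div_add_one hkn, one_mul]
    _ ≤ 1 / k + 1 / k := by
        gcongr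
        · exact mul_le_of_le_one_right (by positivity) (by linarith)
        · exact sub_le_self _ (by positivity)
    _ = 2 / k := by ring

theorem sum_Ico_div_sub_div_add_one_le {a : ℕ → ℝ} {k n : ℕ} (ha : MonotoneOn a (Icc 1 n))
    (ha₀ : 0 ≤ a 1) (ha₁ : a n ≤ 1) (hk : 1 ≤ k) (hkn : k ≤ n) :
    ∑ K ∈ Finset.Ico 1 n, (a (K + 1) / K - a K / (K + 1)) ≤ 2 * a k + 2 / k := by
  rw [← Finset.sum_Ico_consecutive _ hk hkn]
  exact add_le_add
    (sum_Ico_div_sub_div_add_one_le_two_mul (ha.mono (Icc_subset_Icc le_rfl hkn)) ha₀ hk)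
    (sum_Ico_div_sub_div_add_one_le_two_div (ha.mono (Icc_subset_Icc hk le_rfl))
      (ha₀.trans (ha ⟨le_rfl, hk.trans hkn⟩ ⟨hk, hkn⟩ hk)) ha₁ hk hkn)

namespace Dickman

variable {ρ : ℝ → ℝ}

theorem antitoneOn_Ici_zero (hcont : ContinuousOn ρ (Ici 0))
    (hone : ∀ x ∈ Icc (0 : ℝ) 1, ρ x = 1) (hnonneg : ∀ x : ℝ, 0 ≤ x → 0 ≤ ρ x)
    (hderiv : ∀ x : ℝ, 1 < x → HasDerivAt ρ (-ρ (x - 1) / x) x) :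
    AntitoneOn ρ (Ici 0) := by
  have hflat : AntitoneOn ρ (Icc 0 1) := fun x hx y hy _ => by rw [hone x hx, hone y hy]
  have htail : AntitoneOn ρ (Ici 1) := by
    refine antitoneOn_of_hasDerivWithinAt_nonpos (f' := fun x => -ρ (x - 1) / x)
      (convex_Ici 1) (hcont.mono (Ici_subset_Ici.2 zero_le_one)) (fun x hx => ?_) fun x hx => ?_
    · rw [interior_Ici] at hx
      exact (hderiv x hx).hasDerivWithinAt
    · rw [interior_Ici] at hx
      have hx : 1 < x := hx
      exact div_nonpos_of_nonpos_of_nonneg (neg_nonpos.2 (hnonneg _ (by linarith)))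
        (by linarith)
  rw [← Icc_union_Ici_eq_Ici zero_le_one]
  exact hflat.union_right htail (isGreatest_Icc zero_le_one) isLeast_Ici

theorem continuousOn_delay_div (hcont : ContinuousOn ρ (Ici 0)) {a b : ℝ} (ha : 1 ≤ a) :
    ContinuousOn (fun y => ρ (y - 1) / y) (Icc a b) :=
  (hcont.comp (continuousOn_id.sub continuousOn_const) fun y hy =>
    (show (0 : ℝ) ≤ y - 1 by linarith [hy.1])).div continuousOn_id fun y hy => by
      linarith [hy.1]

theorem integral_delay_div_eq_sub (hcont : ContinuousOn ρ (Ici 0))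
    (hderiv : ∀ x : ℝ, 1 < x → HasDerivAt ρ (-ρ (x - 1) / x) x) {a b : ℝ} (ha : 1 ≤ a)
    (hab : a ≤ b) :
    ∫ y in a..b, ρ (y - 1) / y = ρ a - ρ b := by
  have hftc := integral_eq_sub_of_hasDerivAt_of_le hab
    (hcont.mono fun y hy => (show (0 : ℝ) ≤ y by linarith [hy.1]))
    (fun y hy => hderiv y (ha.trans_lt hy.1))
    (by
      simp_rw [neg_div]
      exact (continuousOn_delay_div hcont ha).neg.intervalIntegrable_of_Icc hab)
  simp only [neg_div, intervalIntegral.integral_neg] at hftc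
  linarith

theorem mul_log_le_one (hcont : ContinuousOn ρ (Ici 0))
    (hone : ∀ x ∈ Icc (0 : ℝ) 1, ρ x = 1) (hnonneg : ∀ x : ℝ, 0 ≤ x → 0 ≤ ρ x)
    (hderiv : ∀ x : ℝ, 1 < x → HasDerivAt ρ (-ρ (x - 1) / x) x) {b : ℝ} (hb : 1 ≤ b) :
    ρ b * Real.log b ≤ 1 := by
  have hanti := antitoneOn_Ici_zero hcont hone hnonneg hderiv
  have hmono : ∫ y in (1 : ℝ)..b, ρ b * (1 / y) ≤ ∫ y in (1 : ℝ)..b, ρ (y - 1) / y :=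
    integral_mono_on hb
    ((continuousOn_const.mul (continuousOn_const.div continuousOn_id
      fun y hy => (show (0 : ℝ) < y by linarith [hy.1]).ne')).intervalIntegrable_of_Icc hb)
    ((continuousOn_delay_div hcont le_rfl).intervalIntegrable_of_Icc hb)
    fun y hy => by
      rw [mul_one_div]
      gcongr
      · linarith [hy.1]
      · exact hanti (by simp; linarith [hy.1]) (by simp; linarith) (by linarith [hy.2])
  rw [intervalIntegral.integral_const_mul, integral_one_div_of_pos one_pos (by linarith),
    div_one, integral_delay_div_eq_sub hcont hderiv le_rfl hb,
    hone 1 ⟨zero_le_one, le_rfl⟩] at hmono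
  linarith [hnonneg b (by linarith)]

theorem tendsto_atTop_zero (hcont : ContinuousOn ρ (Ici 0))
    (hone : ∀ x ∈ Icc (0 : ℝ) 1, ρ x = 1) (hnonneg : ∀ x : ℝ, 0 ≤ x → 0 ≤ ρ x)
    (hderiv : ∀ x : ℝ, 1 < x → HasDerivAt ρ (-ρ (x - 1) / x) x) :
    Tendsto ρ atTop (𝓝 0) := by
  refine squeeze_zero' (eventually_atTop.2 ⟨0, hnonneg⟩) ?_
    Real.tendsto_log_atTop.inv_tendsto_atTop
  filter_upwards [eventually_gt_atTop 1] with b hb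
  rw [Pi.inv_apply, ← one_div, le_div_iff₀ (Real.log_pos hb)]
  exact mul_log_le_one hcont hone hnonneg hderiv hb.le

theorem integral_slice_mem_Icc (hcont : ContinuousOn ρ (Ici 0))
    (hnonneg : ∀ x : ℝ, 0 ≤ x → 0 ≤ ρ x) (hanti : AntitoneOn ρ (Ici 0)) {u M : ℝ} (hu : 1 ≤ u)
    (huM : u + 1 ≤ M) :
    ∫ x in (M - u - 1) / u..(M - u) / u, ρ x / (M / u - x) ∈
      Icc (ρ (M / u - 1) / (u + 1)) (ρ (M / (u + 1) - 1) / u) := by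
  have hu₀ : 0 < u := by linarith
  have hleft : (M - u - 1) / u = M / u - 1 - 1 / u := by field_simp
  have hright : (M - u) / u = M / u - 1 := by field_simp
  have hleft₀ : 0 ≤ M / u - 1 - 1 / u := by
    rw [← hleft]; exact div_nonneg (by linarith) hu₀.le
  have hlow₀ : 0 ≤ M / (u + 1) - 1 := by
    rw [sub_nonneg, le_div_iff₀ (by positivity)]; linarith
  have hlow : M / (u + 1) - 1 ≤ M / u - 1 - 1 / u := by
    rw [← hleft, div_sub_one (by positivity), div_le_div_iff₀ (by positivity) hu₀]
    nlinarith
  rw [hleft, hright]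
  have hden {x : ℝ} (hx : x ∈ Icc (M / u - 1 - 1 / u) (M / u - 1)) :
      1 ≤ M / u - x ∧ M / u - x ≤ (u + 1) / u := by
    rw [add_div, div_self hu₀.ne']
    constructor <;> linarith [hx.1, hx.2]
  have hbounds := intervalIntegral_mem_Icc_of_forall_mem_Icc (by linarith [one_div_pos.2 hu₀])
    (f := fun x => ρ x / (M / u - x)) (lo := ρ (M / u - 1) / ((u + 1) / u))
    (hi := ρ (M / (u + 1) - 1))
    ((hcont.mono fun x hx => hleft₀.trans hx.1).div (continuousOn_const.sub continuousOn_id)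
      fun x hx => (zero_lt_one.trans_le (hden hx).1).ne')
    fun x hx => by
      have hx₀ : 0 ≤ x := hleft₀.trans hx.1
      obtain ⟨hd₁, hd₂⟩ := hden hx
      constructor
      · exact div_le_div₀ (hnonneg x hx₀) (hanti hx₀ (hx₀.trans hx.2) hx.2) (by linarith) hd₂
      · exact (div_le_self (hnonneg x hx₀) hd₁).trans
          (hanti hlow₀ hx₀ (hlow.trans hx.1))
  have hlength : M / u - 1 - (M / u - 1 - 1 / u) = 1 / u := by ring
  have hlo : ∀ X : ℝ, 1 / u * (X / ((u + 1) / u)) = X / (u + 1) := fun X => by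
    field_simp
  rwa [hlength, hlo, one_div_mul_eq_div] at hbounds

theorem increment_mem_Icc (hcont : ContinuousOn ρ (Ici 0))
    (hnonneg : ∀ x : ℝ, 0 ≤ x → 0 ≤ ρ x)
    (hderiv : ∀ x : ℝ, 1 < x → HasDerivAt ρ (-ρ (x - 1) / x) x) (hanti : AntitoneOn ρ (Ici 0))
    {u M : ℝ} (hu : 1 ≤ u) (huM : u + 1 ≤ M) :
    ρ (M / (u + 1)) - ρ (M / u) ∈
      Icc (ρ (M / u - 1) / (u + 1)) (ρ (M / (u + 1) - 1) / u) := by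
  have hu₀ : 0 < u := by linarith
  have hone_le : 1 ≤ M / (u + 1) := by rw [le_div_iff₀ (by positivity)]; linarith
  have hle : M / (u + 1) ≤ M / u := div_le_div_of_nonneg_left (by linarith) hu₀ (by linarith)
  rw [← integral_delay_div_eq_sub hcont hderiv hone_le hle]
  have hbounds := intervalIntegral_mem_Icc_of_forall_mem_Icc hle
    (continuousOn_delay_div hcont hone_le) (lo := ρ (M / u - 1) / (M / u))
    (hi := ρ (M / (u + 1) - 1) / (M / (u + 1))) fun y hy => by
      constructor
      · exact div_le_div₀ (hnonneg _ (by linarith [hy.1])) (hanti (by simp; linarith [hy.1])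
          (by simp; linarith) (by linarith [hy.2])) (by linarith [hy.1]) hy.2
      · exact div_le_div₀ (hnonneg _ (by linarith)) (hanti (by simp; linarith)
          (by simp; linarith [hy.1]) (by linarith [hy.1])) (by linarith) hy.1
  have hM₀ : M ≠ 0 := (show 0 < M by linarith).ne'
  have hlo : ∀ X : ℝ, (M / u - M / (u + 1)) * (X / (M / u)) = X / (u + 1) := fun X => by
    field_simp; ring
  have hhi : ∀ X : ℝ, (M / u - M / (u + 1)) * (X / (M / (u + 1))) = X / u := fun X => by
    field_simp; ring
  rwa [hlo, hhi] at hbounds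

theorem dist_sum_integral_one_le (hcont : ContinuousOn ρ (Ici 0))
    (hone : ∀ x ∈ Icc (0 : ℝ) 1, ρ x = 1) (hnonneg : ∀ x : ℝ, 0 ≤ x → 0 ≤ ρ x)
    (hderiv : ∀ x : ℝ, 1 < x → HasDerivAt ρ (-ρ (x - 1) / x) x) {L k : ℕ} (hk : 1 ≤ k)
    (hkL : k ≤ L) :
    dist (∑ K ∈ Finset.Icc 1 (L - 1),
        ∫ x in ((L : ℝ) - K - 1) / K..((L : ℝ) - K) / K, ρ x / ((L : ℝ) / K - x)) 1 ≤
      3 * ρ (L / k - 1) + 2 / k := by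
  have hanti := antitoneOn_Ici_zero hcont hone hnonneg hderiv
  have hL : 1 ≤ L := hk.trans hkL
  have hL₀ : (0 : ℝ) < L := by exact_mod_cast hL
  have harg {K : ℕ} (hK : 1 ≤ K) (hKL : K ≤ L) : 0 ≤ (L : ℝ) / K - 1 := by
    rw [sub_nonneg, one_le_div (by exact_mod_cast hK)]
    exact_mod_cast hKL
  set a : ℕ → ℝ := fun K => ρ (L / K - 1) with ha_def
  have ha : MonotoneOn a (Icc 1 L) := fun i hi j hj hij =>
    hanti (harg hj.1 hj.2) (harg hi.1 hi.2) (by gcongr; exact_mod_cast hi.1)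
  have hρL : ρ L ≤ a k := hanti (harg hk hkL) hL₀.le
    (by linarith [div_le_self hL₀.le (show (1 : ℝ) ≤ k by exact_mod_cast hk)])
  have htele : ∑ K ∈ Finset.Ico 1 L, (ρ (L / (K + 1)) - ρ (L / K)) = 1 - ρ L := by
    have := Finset.sum_Ico_sub (fun K : ℕ => ρ (L / K)) hL
    push_cast at this
    rw [this, div_self hL₀.ne', hone 1 ⟨zero_le_one, le_rfl⟩, div_one]
  have hterm : ∀ K ∈ Finset.Ico 1 L,
      dist (∫ x in ((L : ℝ) - K - 1) / K..((L : ℝ) - K) / K, ρ x / ((L : ℝ) / K - x))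
        (ρ (L / (K + 1)) - ρ (L / K)) ≤ a (K + 1) / K - a K / (K + 1) := by
    intro K hK
    obtain ⟨hK₁, hKL⟩ := Finset.mem_Ico.1 hK
    have hu : (1 : ℝ) ≤ K := by exact_mod_cast hK₁
    have huM : (K : ℝ) + 1 ≤ L := by exact_mod_cast hKL
    simpa only [ha_def, Nat.cast_add, Nat.cast_one, ← sub_div] using Real.dist_le_of_mem_Icc
      (integral_slice_mem_Icc hcont hnonneg hanti hu huM)
      (increment_mem_Icc hcont hnonneg hderiv hanti hu huM)
  have hsum := sum_Ico_div_sub_div_add_one_le ha (hnonneg _ (harg le_rfl hL))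
    (by simp [ha_def, div_self hL₀.ne', hone 0]) hk hkL
  rw [Finset.Icc_sub_one_right_eq_Ico_of_not_isMin (by simp; omega)]
  calc _ ≤ dist (∑ K ∈ Finset.Ico 1 L,
        ∫ x in ((L : ℝ) - K - 1) / K..((L : ℝ) - K) / K, ρ x / ((L : ℝ) / K - x)) (1 - ρ L) +
        dist (1 - ρ L) 1 := dist_triangle _ _ _
    _ ≤ (2 * a k + 2 / k) + ρ L := by
      gcongr
      · rw [← htele]
        exact (dist_sum_sum_le_of_le _ hterm).trans hsum
      · rw [Real.dist_eq, sub_sub_cancel_left, abs_neg, abs_of_nonneg (hnonneg _ hL₀.le)]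
    _ ≤ 3 * ρ (L / k - 1) + 2 / k := by linarith

end Dickman

/-- For the Dickman function `ρ` (equal to `1` on `[0,1]`, nonnegative, continuous on
`[0,∞)`, satisfying `x·ρ'(x) + ρ(x-1) = 0` for `x > 1`),
`Σ_{K=1}^{L-1} ∫_{(L-K-1)/K}^{(L-K)/K} ρ(x)/(L/K - x) dx → 1` as the integer
`L → ∞`. -/
theorem dickman_sum_integral_tendsto_one (ρ : ℝ → ℝ)
    (hcont : ContinuousOn ρ (Set.Ici 0))
    (hone : ∀ x ∈ Set.Icc (0 : ℝ) 1, ρ x = 1)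
    (hnonneg : ∀ x : ℝ, 0 ≤ x → 0 ≤ ρ x)
    (hderiv : ∀ x : ℝ, 1 < x → HasDerivAt ρ (-ρ (x - 1) / x) x) :
    Tendsto (fun L : ℕ =>
        ∑ K ∈ Finset.Icc 1 (L - 1),
          ∫ x in (((L : ℝ) - K - 1) / K)..(((L : ℝ) - K) / K),
            ρ x / ((L : ℝ) / K - x))
      atTop (𝓝 1) := by
  refine Metric.tendsto_nhds.2 fun ε hε => ?_
  obtain ⟨k, hk⟩ := exists_nat_gt (4 / ε)
  have hk₀ : (0 : ℝ) < k := (div_pos four_pos hε).trans hk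
  have hk₁ : 1 ≤ k := by exact_mod_cast hk₀
  have hsmall : ∀ᶠ L : ℕ in atTop, ρ (L / k - 1) < ε / 6 :=
    ((Dickman.tendsto_atTop_zero hcont hone hnonneg hderiv).comp
      (tendsto_atTop_add_const_right _ (-1)
        (tendsto_natCast_atTop_atTop.atTop_div_const hk₀))).eventually
      (gt_mem_nhds (by linarith))
  filter_upwards [hsmall, eventually_ge_atTop k] with L hL hkL
  have h2k : 2 / (k : ℝ) < ε / 2 := by
    rw [div_lt_iff₀ hk₀]; rw [div_lt_iff₀ hε] at hk; linarith
  calc _ ≤ 3 * ρ (L / k - 1) + 2 / k :=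
        Dickman.dist_sum_integral_one_le hcont hone hnonneg hderiv hk₁ hkL
    _ < ε := by linarith
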